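/- arXiv:1207.4918 — 4 statements merged into one kernel-verified Lean document; each statement's English description precedes it below -/
import Mathlib

section
/- In the braid group B_{n+1} on n+1 strands with Artin generators σ_1, …, σ_n, the product η_1 η_2 ⋯ η_n equals σ_n σ_{n-1} ⋯ σ_2 σ_1, where η_k = σ_1 σ_2 ⋯ σ_{n-k+1} σ_{n-k+2}^{-1} ⋯ σ_n^{-1} (i.e. η_k is the word σ_1 σ_2 ⋯ σ_n in which the last k−1 generators appear inverted). -/
/-- The word `η_k = σ_1 σ_2 ⋯ σ_{n-k+1} · σ_{n-k+2}^{-1} ⋯ σ_n^{-1}` in a group with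
distinguished elements `σ 1, …, σ n`. -/
def braidEta {G : Type*} [Group G] (σ : ℕ → G) (n k : ℕ) : G :=
  (((List.range (n + 1 - k)).map fun i => σ (i + 1)).prod) *
  (((List.range (k - 1)).map fun i => (σ (n + 2 - k + i))⁻¹).prod)

namespace BraidAux
variable {G : Type*} [Group G]

/-- The descending word `σ_{a+l-1} σ_{a+l-2} ⋯ σ_a`. -/
def bDesc (σ : ℕ → G) (a l : ℕ) : G := ((List.range l).map fun i => σ (a + l - 1 - i)).prod
/-- The ascending word `σ_a σ_{a+1} ⋯ σ_{a+l-1}`. -/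
def bAsc (σ : ℕ → G) (a l : ℕ) : G := ((List.range l).map fun i => σ (a + i)).prod
/-- The rectangle word: `c` consecutive descending runs of length `m`. -/
def bRect (σ : ℕ → G) (m c : ℕ) : G := ((List.range c).map fun t => bDesc σ (t + 1) m).prod

variable (σ : ℕ → G)

lemma bDesc_succ_top (a l : ℕ) : bDesc σ a (l + 1) = σ (a + l) * bDesc σ a l := by
  unfold bDesc
  rw [List.range_succ_eq_map, List.map_cons, List.prod_cons, List.map_map]
  have h1 : a + (l + 1) - 1 - 0 = a + l := by omega
  have h2 : ((fun i => σ (a + (l + 1) - 1 - i)) ∘ Nat.succ) = fun i => σ (a + l - 1 - i) := by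
    funext i; simp only [Function.comp_apply]; congr 1; omega
  rw [h1, h2]

lemma bDesc_succ_bot (a l : ℕ) : bDesc σ a (l + 1) = bDesc σ (a + 1) l * σ a := by
  unfold bDesc
  rw [List.range_succ, List.map_append, List.prod_append]
  have h1 : (fun i => σ (a + (l + 1) - 1 - i)) = fun i => σ (a + 1 + l - 1 - i) := by
    funext i; congr 1; omega
  rw [h1]; simp

lemma bAsc_succ (a l : ℕ) : bAsc σ a (l + 1) = bAsc σ a l * σ (a + l) := by
  unfold bAsc
  rw [List.range_succ, List.map_append, List.prod_append]; simp

lemma bRect_succ (m c : ℕ) : bRect σ m (c + 1) = bRect σ m c * bDesc σ (c + 1) m := by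
  unfold bRect
  rw [List.range_succ, List.map_append, List.prod_append]; simp

lemma bRect_zero_rows (c : ℕ) : bRect σ 0 c = 1 := by
  induction c with
  | zero => rfl
  | succ c ih => rw [bRect_succ, ih]; simp [bDesc]

variable (n : ℕ)
  (h_comm : ∀ i j : ℕ, 1 ≤ i → i + 2 ≤ j → j ≤ n → σ i * σ j = σ j * σ i)
  (h_braid : ∀ i : ℕ, 1 ≤ i → i + 1 ≤ n →
    σ i * σ (i + 1) * σ i = σ (i + 1) * σ i * σ (i + 1))

section WithComm
include h_comm

lemma commute_bDesc_above {i a l : ℕ} (hi : a + l + 1 ≤ i) (hin : i ≤ n) (ha : 1 ≤ a) :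
    Commute (σ i) (bDesc σ a l) := by
  apply Commute.list_prod_right
  intro y hy
  simp only [List.mem_map, List.mem_range] at hy
  obtain ⟨k, hk, rfl⟩ := hy
  exact (h_comm _ i (by omega) (by omega) hin).symm

lemma commute_bDesc_below {i a l : ℕ} (hi : i + 2 ≤ a) (hl : a + l ≤ n + 1) (hi1 : 1 ≤ i) :
    Commute (σ i) (bDesc σ a l) := by
  apply Commute.list_prod_right
  intro y hy
  simp only [List.mem_map, List.mem_range] at hy
  obtain ⟨k, hk, rfl⟩ := hy
  exact h_comm i _ hi1 (by omega) (by omega)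

lemma commute_bRect_above {i m c : ℕ} (hi : m + c + 1 ≤ i) (hin : i ≤ n) :
    Commute (σ i) (bRect σ m c) := by
  apply Commute.list_prod_right
  intro y hy
  simp only [List.mem_map, List.mem_range] at hy
  obtain ⟨t, ht, rfl⟩ := hy
  exact commute_bDesc_above σ n h_comm (show (t + 1) + m + 1 ≤ i by omega) hin (by omega)

include h_braid

lemma slide : ∀ l a j, 1 ≤ a → a ≤ j → j + 2 ≤ a + l → a + l ≤ n + 1 →
    σ j * bDesc σ a l = bDesc σ a l * σ (j + 1) := by
  intro l
  induction l with
  | zero => intro a j _ _ h _; omega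
  | succ l ih =>
    intro a j ha haj hj hn
    rw [bDesc_succ_bot]
    rcases Nat.eq_or_lt_of_le haj with rfl | hlt
    · obtain ⟨l', rfl⟩ : ∃ l', l = l' + 1 := ⟨l - 1, by omega⟩
      rw [bDesc_succ_bot]
      have hcomm := (commute_bDesc_below σ n h_comm (i := a) (a := a + 2) (l := l')
        (by omega) (by omega) ha)
      have hb := h_braid a ha (by omega)
      calc σ a * (bDesc σ (a + 1 + 1) l' * σ (a + 1) * σ a)
          = bDesc σ (a + 1 + 1) l' * (σ a * σ (a + 1) * σ a) := by
            simp only [show a + 1 + 1 = a + 2 from rfl, ← mul_assoc, hcomm.eq]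
        _ = bDesc σ (a + 1 + 1) l' * (σ (a + 1) * σ a * σ (a + 1)) := by rw [hb]
        _ = bDesc σ (a + 1 + 1) l' * σ (a + 1) * σ a * σ (a + 1) := by
            rw [mul_assoc, mul_assoc, mul_assoc]
    · have h1 := ih (a + 1) j (by omega) (by omega) (by omega) (by omega)
      have h2 := h_comm a (j + 1) ha (by omega) (by omega)
      calc σ j * (bDesc σ (a + 1) l * σ a)
          = (σ j * bDesc σ (a + 1) l) * σ a := by rw [mul_assoc]
        _ = bDesc σ (a + 1) l * σ (j + 1) * σ a := by rw [h1]
        _ = bDesc σ (a + 1) l * σ a * σ (j + 1) := by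
            rw [mul_assoc, mul_assoc, ← h2]

/-- Slide a whole descending word through a longer descending word. -/
lemma slide_desc (a L : ℕ) : ∀ l p, 1 ≤ a → a ≤ p → p + l + 1 ≤ a + L → a + L ≤ n + 1 →
    bDesc σ p l * bDesc σ a L = bDesc σ a L * bDesc σ (p + 1) l := by
  intro l
  induction l with
  | zero => intro p _ _ _ _; simp [bDesc]
  | succ l ih =>
    intro p ha hap hl hL
    rw [bDesc_succ_top σ p l, bDesc_succ_top σ (p + 1) l, show p + 1 + l = p + l + 1 by omega]
    calc σ (p + l) * bDesc σ p l * bDesc σ a L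
        = σ (p + l) * (bDesc σ p l * bDesc σ a L) := by rw [mul_assoc]
      _ = σ (p + l) * (bDesc σ a L * bDesc σ (p + 1) l) := by
          rw [ih p ha hap (by omega) hL]
      _ = (σ (p + l) * bDesc σ a L) * bDesc σ (p + 1) l := by rw [mul_assoc]
      _ = (bDesc σ a L * σ (p + l + 1)) * bDesc σ (p + 1) l := by
          rw [slide σ n h_comm h_braid L a (p + l) ha (by omega) (by omega) hL]
      _ = bDesc σ a L * (σ (p + l + 1) * bDesc σ (p + 1) l) := by rw [mul_assoc]

/-- Conjugation by the rectangle shifts low generators up by `m`. -/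
lemma shift (m : ℕ) : ∀ c i, 1 ≤ i → i + 1 ≤ c → m + c ≤ n + 1 →
    bRect σ m c * σ i = σ (i + m) * bRect σ m c := by
  intro c
  induction c with
  | zero => intro i _ h _; omega
  | succ c ih =>
    intro i hi hic hmc
    rw [bRect_succ]
    rcases Nat.lt_or_ge i c with hlt | hge
    · -- i + 1 ≤ c : commute past the last column, use ih
      have hcomm := (commute_bDesc_below σ n h_comm (i := i) (a := c + 1) (l := m)
        (by omega) (by omega) hi)
      calc bRect σ m c * bDesc σ (c + 1) m * σ i
          = bRect σ m c * (bDesc σ (c + 1) m * σ i) := by rw [mul_assoc]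
        _ = bRect σ m c * (σ i * bDesc σ (c + 1) m) := by rw [← hcomm.eq]
        _ = (bRect σ m c * σ i) * bDesc σ (c + 1) m := by rw [mul_assoc]
        _ = σ (i + m) * bRect σ m c * bDesc σ (c + 1) m := by
            rw [ih i hi (by omega) (by omega)]
        _ = σ (i + m) * (bRect σ m c * bDesc σ (c + 1) m) := by rw [mul_assoc]
    · -- i = c
      have hieq : i = c := by omega
      subst hieq
      obtain ⟨d, rfl⟩ : ∃ d, i = d + 1 := ⟨i - 1, by omega⟩
      -- LHS = bRect m d * bDesc (d+1) m * bDesc (d+1) (m+1) after bottom extension,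
      -- then slide
      have hbot : bDesc σ (d + 1 + 1) m * σ (d + 1) = bDesc σ (d + 1) (m + 1) :=
        (bDesc_succ_bot σ (d + 1) m).symm
      have hslide := slide_desc σ n h_comm h_braid (d + 1) (m + 1) m (d + 1)
        (by omega) le_rfl (by omega) (by omega)
      have htop : σ (d + 1 + m) * bDesc σ (d + 1) m = bDesc σ (d + 1) (m + 1) := by
        rw [bDesc_succ_top]
      have hRcomm := commute_bRect_above σ n h_comm (i := d + 1 + m) (m := m) (c := d)
        (by omega) (by omega)
      rw [bRect_succ]
      calc bRect σ m d * bDesc σ (d + 1) m * bDesc σ (d + 1 + 1) m * σ (d + 1)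
          = bRect σ m d * bDesc σ (d + 1) m * (bDesc σ (d + 1 + 1) m * σ (d + 1)) := by
            rw [mul_assoc]
        _ = bRect σ m d * (bDesc σ (d + 1) m * bDesc σ (d + 1) (m + 1)) := by
            rw [hbot, mul_assoc]
        _ = bRect σ m d * (bDesc σ (d + 1) (m + 1) * bDesc σ (d + 1 + 1) m) := by
            rw [hslide]
        _ = bRect σ m d * (σ (d + 1 + m) * bDesc σ (d + 1) m) * bDesc σ (d + 1 + 1) m := by
            rw [htop, mul_assoc]
        _ = σ (d + 1 + m) * (bRect σ m d * bDesc σ (d + 1) m) * bDesc σ (d + 1 + 1) m := by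
            simp only [← mul_assoc]
            rw [show bRect σ m d * σ (d + 1 + m) = σ (d + 1 + m) * bRect σ m d
              from hRcomm.eq.symm]
        _ = σ (d + 1 + m) * (bRect σ m d * bDesc σ (d + 1) m * bDesc σ (d + 1 + 1) m) := by
            simp only [mul_assoc]

/-- Move an ascending block `σ_1 ⋯ σ_l` through the rectangle. -/
lemma rect_asc (m C : ℕ) : ∀ l, l + 1 ≤ C → m + C ≤ n + 1 →
    bRect σ m C * bAsc σ 1 l = bAsc σ (m + 1) l * bRect σ m C := by
  intro l
  induction l with
  | zero => intro _ _; simp [bAsc]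
  | succ l ih =>
    intro hl hC
    rw [bAsc_succ, bAsc_succ]
    have hs := shift σ n h_comm h_braid m C (1 + l) (by omega) (by omega) hC
    calc bRect σ m C * (bAsc σ 1 l * σ (1 + l))
        = (bRect σ m C * bAsc σ 1 l) * σ (1 + l) := by rw [mul_assoc]
      _ = bAsc σ (m + 1) l * bRect σ m C * σ (1 + l) := by rw [ih (by omega) hC]
      _ = bAsc σ (m + 1) l * (σ (1 + l + m) * bRect σ m C) := by rw [mul_assoc, hs]
      _ = bAsc σ (m + 1) l * σ (m + 1 + l) * bRect σ m C := by
          rw [show 1 + l + m = m + 1 + l by omega, mul_assoc]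

end WithComm

section Peel
include h_comm

lemma peel (m : ℕ) : ∀ c, m + c + 1 ≤ n + 1 →
    bRect σ (m + 1) c = bAsc σ (m + 1) c * bRect σ m c := by
  intro c
  induction c with
  | zero => intro _; simp [bRect, bAsc]
  | succ c ih =>
    intro hc
    have hcomm := commute_bRect_above σ n h_comm (i := c + 1 + m) (m := m) (c := c)
      (by omega) (by omega)
    rw [bRect_succ, ih (by omega), bDesc_succ_top, bAsc_succ, bRect_succ]
    have heq : bRect σ m c * σ (c + 1 + m) = σ (c + 1 + m) * bRect σ m c := hcomm.eq.symm
    calc bAsc σ (m + 1) c * bRect σ m c * (σ (c + 1 + m) * bDesc σ (c + 1) m)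
        = bAsc σ (m + 1) c * (bRect σ m c * σ (c + 1 + m)) * bDesc σ (c + 1) m := by
          simp only [mul_assoc]
      _ = bAsc σ (m + 1) c * (σ (c + 1 + m) * bRect σ m c) * bDesc σ (c + 1) m := by
          rw [heq]
      _ = bAsc σ (m + 1) c * σ (m + 1 + c) * (bRect σ m c * bDesc σ (c + 1) m) := by
          rw [show c + 1 + m = m + 1 + c by omega]; simp only [mul_assoc]

end Peel

lemma cancel : ∀ l a, bDesc σ a l * ((List.range l).map fun i => (σ (a + i))⁻¹).prod = 1 := by
  intro l
  induction l with
  | zero => intro a; simp [bDesc]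
  | succ l ih =>
    intro a
    rw [bDesc_succ_bot, List.range_succ_eq_map, List.map_cons, List.prod_cons, List.map_map]
    have h2 : ((fun i => (σ (a + i))⁻¹) ∘ Nat.succ) = fun i => (σ (a + 1 + i))⁻¹ := by
      funext i; simp only [Function.comp_apply]; congr 2; omega
    rw [h2]
    calc bDesc σ (a + 1) l * σ a * ((σ (a + 0))⁻¹ *
          ((List.range l).map fun i => (σ (a + 1 + i))⁻¹).prod)
        = bDesc σ (a + 1) l * ((List.range l).map fun i => (σ (a + 1 + i))⁻¹).prod := by
          simp [mul_assoc]
      _ = 1 := ih (a + 1)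



include h_comm h_braid in
/-- Key invariant: the partial product `η_1 ⋯ η_m` equals the rectangle word. -/
lemma invariant : ∀ m c, m + c = n →
    (((List.range m).map fun j => braidEta σ n (j + 1)).prod) = bRect σ m (c + 1) := by
  intro m
  induction m with
  | zero => intro c h; simp [bRect_zero_rows]
  | succ m ih =>
    intro c h
    rw [List.range_succ, List.map_append, List.prod_append, ih (c + 1) (by omega)]
    simp only [List.map_cons, List.prod_cons, List.map_nil, List.prod_nil, mul_one]
    have h1 : n + 1 - (m + 1) = c + 1 := by omega
    have h2 : n + 2 - (m + 1) = c + 2 := by omega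
    have hEta : braidEta σ n (m + 1) = bAsc σ 1 (c + 1) *
        ((List.range m).map fun i => (σ (c + 2 + i))⁻¹).prod := by
      unfold braidEta bAsc
      rw [h1, h2, Nat.add_sub_cancel,
        show (fun i => σ (i + 1)) = (fun i => σ (1 + i)) by funext i; congr 1; omega]
    rw [hEta]
    have hra := rect_asc σ n h_comm h_braid m (c + 2) (c + 1) (by omega) (by omega)
    have hpeel := peel σ n h_comm m (c + 1) (by omega)
    have hcan := cancel σ m (c + 2)
    have hcp1 : c + 1 + 1 = c + 2 := rfl
    calc bRect σ m (c + 1 + 1) *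
          (bAsc σ 1 (c + 1) * ((List.range m).map fun i => (σ (c + 2 + i))⁻¹).prod)
        = (bRect σ m (c + 2) * bAsc σ 1 (c + 1)) *
            ((List.range m).map fun i => (σ (c + 2 + i))⁻¹).prod := by
          rw [hcp1, mul_assoc]
      _ = bAsc σ (m + 1) (c + 1) * bRect σ m (c + 2) *
            ((List.range m).map fun i => (σ (c + 2 + i))⁻¹).prod := by rw [hra]
      _ = bAsc σ (m + 1) (c + 1) * (bRect σ m (c + 1) *
            (bDesc σ (c + 2) m * ((List.range m).map fun i => (σ (c + 2 + i))⁻¹).prod)) := by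
          rw [show (c + 2 : ℕ) = (c + 1) + 1 from rfl, bRect_succ]
          simp only [mul_assoc]
      _ = bAsc σ (m + 1) (c + 1) * bRect σ m (c + 1) := by rw [hcan, mul_one]
      _ = bRect σ (m + 1) (c + 1) := hpeel.symm

end BraidAux

/-- In the braid group `B_{n+1}` (any group whose elements `σ 1, …, σ n` satisfy the braid
relations), `η_1 η_2 ⋯ η_n = σ_n σ_{n-1} ⋯ σ_1`. -/
theorem braid_eta_prod_eq_descending (n : ℕ) {G : Type*} [Group G] (σ : ℕ → G)
    (h_comm : ∀ i j : ℕ, 1 ≤ i → i + 2 ≤ j → j ≤ n → σ i * σ j = σ j * σ i)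
    (h_braid : ∀ i : ℕ, 1 ≤ i → i + 1 ≤ n →
      σ i * σ (i + 1) * σ i = σ (i + 1) * σ i * σ (i + 1)) :
    (((List.range n).map fun j => braidEta σ n (j + 1)).prod) =
      (((List.range n).map fun i => σ (n - i)).prod) := by
  have h := BraidAux.invariant σ n h_comm h_braid n 0 (by omega)
  rw [h]
  have h2 : BraidAux.bRect σ n (0 + 1) = BraidAux.bDesc σ 1 n := by
    rw [BraidAux.bRect_succ]
    simp [BraidAux.bRect]
  rw [h2]
  unfold BraidAux.bDesc
  rw [show (fun i => σ (1 + n - 1 - i)) = (fun i => σ (n - i)) by funext i; congr 1; omega]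
end

section
/- In the braid group B_{n+1}, the word η_1 η_2 ⋯ η_n η_{n+1} is the identity element, where η_k = σ_1 ⋯ σ_{n-k+1} σ_{n-k+2}^{-1} ⋯ σ_n^{-1} for 1 ≤ k ≤ n and η_{n+1} = σ_1^{-1} σ_2^{-1} ⋯ σ_n^{-1}. -/
namespace BraidAux

variable {G : Type*} [Group G]

/-- `Dl σ a l = σ_a σ_{a+1} ⋯ σ_{a+l-1}`. -/
def Dl (σ : ℕ → G) (a l : ℕ) : G := ((List.range l).map fun i => σ (a + i)).prod

/-- `En σ a t = σ_a⁻¹ σ_{a+1}⁻¹ ⋯ σ_{a+t-1}⁻¹`. -/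
def En (σ : ℕ → G) (a t : ℕ) : G := ((List.range t).map fun i => (σ (a + i))⁻¹).prod

/-- `P1 σ t L = ∏_{j=0}^{t-1} Dl σ (t-j) L`. -/
def P1 (σ : ℕ → G) (t L : ℕ) : G := ((List.range t).map fun j => Dl σ (t - j) L).prod

lemma Dl_zero (σ : ℕ → G) (a : ℕ) : Dl σ a 0 = 1 := by simp [Dl]

lemma Dl_snoc (σ : ℕ → G) (a l : ℕ) : Dl σ a (l + 1) = Dl σ a l * σ (a + l) := by
  simp [Dl, List.range_succ]

lemma Dl_split (σ : ℕ → G) (a p q : ℕ) : Dl σ a (p + q) = Dl σ a p * Dl σ (a + p) q := by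
  induction q with
  | zero => simp [Dl_zero]
  | succ q ih =>
    rw [show p + (q + 1) = (p + q) + 1 from rfl, Dl_snoc, ih, Dl_snoc, mul_assoc,
      show a + p + q = a + (p + q) from by omega]

lemma En_snoc (σ : ℕ → G) (a t : ℕ) : En σ a (t + 1) = En σ a t * (σ (a + t))⁻¹ := by
  simp [En, List.range_succ]

lemma P1_cons (σ : ℕ → G) (t L : ℕ) : P1 σ (t + 1) L = Dl σ (t + 1) L * P1 σ t L := by
  simp [P1, List.range_succ_eq_map, List.map_map, Function.comp_def, Nat.succ_sub_succ]

lemma P1_len_zero (σ : ℕ → G) (t : ℕ) : P1 σ t 0 = 1 := by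
  induction t with
  | zero => simp [P1]
  | succ t ih => rw [P1_cons, Dl_zero, one_mul, ih]

section main

variable (σ : ℕ → G) (n : ℕ)
variable (h_comm : ∀ i j : ℕ, 1 ≤ i → i + 2 ≤ j → j ≤ n → σ i * σ j = σ j * σ i)
variable (h_braid : ∀ i : ℕ, 1 ≤ i → i + 1 ≤ n →
      σ i * σ (i + 1) * σ i = σ (i + 1) * σ i * σ (i + 1))

include h_comm in
lemma comm_high (a l m : ℕ) (ha : 1 ≤ a) (hm : a + l + 1 ≤ m) (hmn : m ≤ n) :
    σ m * Dl σ a l = Dl σ a l * σ m := by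
  induction l with
  | zero => simp [Dl_zero]
  | succ l ih =>
    rw [Dl_snoc, ← mul_assoc, ih (by omega), mul_assoc,
      ← h_comm (a + l) m (by omega) (by omega) hmn, ← mul_assoc]

include h_comm in
lemma comm_low (a l m : ℕ) (hm1 : 1 ≤ m) (hm : m + 2 ≤ a) (hn : a + l ≤ n + 1) :
    σ m * Dl σ a l = Dl σ a l * σ m := by
  induction l with
  | zero => simp [Dl_zero]
  | succ l ih =>
    rw [Dl_snoc, ← mul_assoc, ih (by omega), mul_assoc,
      h_comm m (a + l) hm1 (by omega) (by omega), ← mul_assoc]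

lemma slide_core {X Y u v : G} (h1 : u * Y = Y * u) (h2 : u * v * u = v * u * v)
    (h3 : v * X = X * v) : X * u * v * Y * u = v * (X * u * v * Y) := by
  calc X * u * v * Y * u = X * u * v * (Y * u) := by rw [mul_assoc]
    _ = X * u * v * (u * Y) := by rw [h1]
    _ = X * (u * v * u) * Y := by simp only [mul_assoc]
    _ = X * (v * u * v) * Y := by rw [h2]
    _ = (X * v) * (u * v * Y) := by simp only [mul_assoc]
    _ = (v * X) * (u * v * Y) := by rw [h3]
    _ = v * (X * u * v * Y) := by simp only [mul_assoc]

include h_comm h_braid in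
lemma braid_slide (a l i : ℕ) (ha : 1 ≤ a) (hi1 : a ≤ i) (hi2 : i + 2 ≤ a + l)
    (hn : a + l ≤ n + 1) : Dl σ a l * σ i = σ (i + 1) * Dl σ a l := by
  obtain ⟨p, rfl⟩ : ∃ p, i = a + p := ⟨i - a, by omega⟩
  obtain ⟨q, rfl⟩ : ∃ q, l = (p + 1 + 1) + q := ⟨l - (p + 2), by omega⟩
  rw [Dl_split, Dl_snoc, Dl_snoc]
  have h1 : σ (a + p) * Dl σ (a + (p + 1 + 1)) q = Dl σ (a + (p + 1 + 1)) q * σ (a + p) :=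
    comm_low σ n h_comm _ _ _ (by omega) (by omega) (by omega)
  have h2 : σ (a + p) * σ (a + p + 1) * σ (a + p) = σ (a + p + 1) * σ (a + p) * σ (a + p + 1) :=
    h_braid (a + p) (by omega) (by omega)
  have h3 : σ (a + p + 1) * Dl σ a p = Dl σ a p * σ (a + p + 1) :=
    comm_high σ n h_comm _ _ _ ha (by omega) (by omega)
  exact slide_core h1 h2 h3

include h_comm h_braid in
lemma Dl_swap (a L : ℕ) (ha : 1 ≤ a) (hn : a + L ≤ n) :
    ∀ m, m ≤ L → Dl σ a (L + 1) * Dl σ a m = Dl σ (a + 1) m * Dl σ a (L + 1) := by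
  intro m
  induction m with
  | zero => intro _; rw [Dl_zero, Dl_zero, one_mul, mul_one]
  | succ m ih =>
    intro hm
    rw [Dl_snoc σ a m, ← mul_assoc, ih (by omega), mul_assoc,
      braid_slide σ n h_comm h_braid a (L + 1) (a + m) ha (by omega) (by omega) (by omega),
      ← mul_assoc, ← show a + 1 + m = a + m + 1 from by omega, ← Dl_snoc σ (a + 1) m]

include h_comm h_braid in
lemma key_step (a L : ℕ) (ha : 1 ≤ a) (hn : a + L ≤ n) :
    Dl σ a (L + 1) * Dl σ a L * (σ (a + L))⁻¹ = Dl σ (a + 1) L * Dl σ a L := by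
  rw [Dl_swap σ n h_comm h_braid a L ha hn L le_rfl, mul_assoc, Dl_snoc, mul_assoc,
    mul_inv_cancel, mul_one]

include h_comm in
lemma P1_comm (t L m : ℕ) (hm : t + L + 1 ≤ m) (hmn : m ≤ n) :
    σ m * P1 σ t L = P1 σ t L * σ m := by
  induction t with
  | zero => simp [P1]
  | succ t ih =>
    rw [P1_cons, ← mul_assoc, comm_high σ n h_comm (t + 1) L m (by omega) (by omega) hmn,
      mul_assoc, ih (by omega), ← mul_assoc]

include h_comm h_braid in
lemma sweep : ∀ t L, L + t ≤ n →
    P1 σ t (L + 1) * Dl σ 1 L * En σ (L + 1) t = P1 σ (t + 1) L := by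
  intro t
  induction t with
  | zero =>
    intro L h
    rw [P1_cons]
    simp [P1, En]
  | succ t ih =>
    intro L h
    rw [En_snoc, P1_cons]
    have hiv : (σ (L + 1 + t))⁻¹ * P1 σ t L = P1 σ t L * (σ (L + 1 + t))⁻¹ :=
      (Commute.inv_left (P1_comm σ n h_comm t L (L + 1 + t) (by omega) (by omega))).eq
    calc Dl σ (t + 1) (L + 1) * P1 σ t (L + 1) * Dl σ 1 L * (En σ (L + 1) t * (σ (L + 1 + t))⁻¹)
        = Dl σ (t + 1) (L + 1) * (P1 σ t (L + 1) * Dl σ 1 L * En σ (L + 1) t) * (σ (L + 1 + t))⁻¹ := by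
          simp only [mul_assoc]
      _ = Dl σ (t + 1) (L + 1) * P1 σ (t + 1) L * (σ (L + 1 + t))⁻¹ := by rw [ih L (by omega)]
      _ = Dl σ (t + 1) (L + 1) * (Dl σ (t + 1) L * P1 σ t L) * (σ (L + 1 + t))⁻¹ := by rw [P1_cons]
      _ = Dl σ (t + 1) (L + 1) * Dl σ (t + 1) L * ((σ (L + 1 + t))⁻¹ * P1 σ t L) := by
          rw [mul_assoc, mul_assoc, mul_assoc, hiv]
      _ = (Dl σ (t + 1) (L + 1) * Dl σ (t + 1) L * (σ (t + 1 + L))⁻¹) * P1 σ t L := by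
          rw [show L + 1 + t = t + 1 + L from by omega]; simp only [mul_assoc]
      _ = Dl σ (t + 1 + 1) L * Dl σ (t + 1) L * P1 σ t L := by
          rw [key_step σ n h_comm h_braid (t + 1) L (by omega) (by omega)]
      _ = Dl σ (t + 1 + 1) L * P1 σ (t + 1) L := by rw [mul_assoc, ← P1_cons]
      _ = P1 σ (t + 1 + 1) L := by rw [← P1_cons]

end main

end BraidAux

/-- In the braid group `B_{n+1}`, the word `η_1 η_2 ⋯ η_n η_{n+1}` is trivial. -/
theorem braid_eta_prod_eq_one (n : ℕ) {G : Type*} [Group G] (σ : ℕ → G)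
    (h_comm : ∀ i j : ℕ, 1 ≤ i → i + 2 ≤ j → j ≤ n → σ i * σ j = σ j * σ i)
    (h_braid : ∀ i : ℕ, 1 ≤ i → i + 1 ≤ n →
      σ i * σ (i + 1) * σ i = σ (i + 1) * σ i * σ (i + 1)) :
    (((List.range (n + 1)).map fun j => braidEta σ n (j + 1)).prod) = 1 := by
  open BraidAux in
  have heta : ∀ k, k ≤ n → braidEta σ n (k + 1) = Dl σ 1 (n - k) * En σ (n + 1 - k) k := by
    intro k hk
    unfold braidEta Dl En
    rw [show n + 1 - (k + 1) = n - k from by omega, show (k + 1) - 1 = k from rfl,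
      show n + 2 - (k + 1) = n + 1 - k from by omega]
    have : (fun i => σ (i + 1)) = fun i => σ (1 + i) := by
      funext i; rw [Nat.add_comm]
    rw [this]
  have hpre : ∀ k, k ≤ n + 1 →
      ((List.range k).map fun j => braidEta σ n (j + 1)).prod = P1 σ k (n + 1 - k) := by
    intro k
    induction k with
    | zero => intro _; simp [P1]
    | succ k ih =>
      intro hk
      rw [List.range_succ, List.map_append, List.prod_append, ih (by omega),
        List.map_singleton, List.prod_singleton, heta k (by omega)]
      have hsw := sweep σ n h_comm h_braid k (n - k) (by omega)
      rw [show n + 1 - k = (n - k) + 1 from by omega, ← mul_assoc, hsw,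
        show n + 1 - (k + 1) = n - k from by omega]
  rw [hpre (n + 1) le_rfl, show n + 1 - (n + 1) = 0 from by omega, P1_len_zero]
end

section
/- In the braid group B_{n+1}, let 1 ≤ j < i ≤ n and let g, g_j, g_{j+1}, …, g_n ∈ {1, −1}. If either g = g_{i-1} or g_{i-1} = g_i, then σ_i^g · σ_j^{g_j} σ_{j+1}^{g_{j+1}} ⋯ σ_{i-1}^{g_{i-1}} σ_i^{g_i} σ_{i+1}^{g_{i+1}} ⋯ σ_n^{g_n} = σ_j^{g_j} σ_{j+1}^{g_{j+1}} ⋯ σ_{i-2}^{g_{i-2}} σ_{i-1}^{g_i} σ_i^{g_{i-1}} σ_{i+1}^{g_{i+1}} ⋯ σ_n^{g_n} · σ_{i-1}^g. -/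
private lemma bc2 {G : Type*} [Group G] (x y : G) (hr : x*y*x = y*x*y) :
    y * x * y⁻¹ = x⁻¹ * y * x := by
  refine mul_left_cancel (a := x) ?_
  simp [← mul_assoc, hr]

private lemma bc4 {G : Type*} [Group G] (x y : G) (hr : x*y*x = y*x*y) :
    y⁻¹ * x * y = x * y * x⁻¹ := by
  refine mul_left_cancel (a := y) ?_
  simp [← mul_assoc, ← hr]

lemma braid_core {G : Type*} [Group G] (x y : G) (hr : x*y*x = y*x*y)
    (g a b : ℤ) (hg : g = 1 ∨ g = -1) (ha : a = 1 ∨ a = -1) (hb : b = 1 ∨ b = -1)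
    (h : g = a ∨ a = b) : y ^ g * x ^ a * y ^ b = x ^ b * y ^ a * x ^ g := by
  have hinv : x⁻¹ * y⁻¹ * x⁻¹ = y⁻¹ * x⁻¹ * y⁻¹ := by
    simpa [mul_inv_rev, mul_assoc] using congrArg Inv.inv hr
  rcases hg with rfl | rfl <;> rcases ha with rfl | rfl <;> rcases hb with rfl | rfl <;>
    simp only [zpow_one, zpow_neg_one] <;>
    first
    | omega
    | exact hr.symm
    | exact hinv.symm
    | exact bc2 x y hr
    | exact bc4 x y hr
    | exact bc2 x⁻¹ y⁻¹ hinv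
    | exact bc4 x⁻¹ y⁻¹ hinv
    | simpa using bc2 x⁻¹ y⁻¹ hinv
    | simpa using bc4 x⁻¹ y⁻¹ hinv

/-- Lemma 2.2 of the paper: in the braid group `B_{n+1}`, for `1 ≤ j < i ≤ n` and signs
`g, g_j, …, g_n ∈ {1, -1}` with `g = g_{i-1}` or `g_{i-1} = g_i`,
`σ_i^g · σ_j^{g_j} ⋯ σ_{i-1}^{g_{i-1}} σ_i^{g_i} ⋯ σ_n^{g_n}
  = σ_j^{g_j} ⋯ σ_{i-1}^{g_i} σ_i^{g_{i-1}} ⋯ σ_n^{g_n} · σ_{i-1}^g`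
(on the right the exponents at positions `i-1` and `i` are swapped). -/
theorem braid_signed_shift (n : ℕ) {G : Type*} [Group G] (σ : ℕ → G)
    (h_comm : ∀ i j : ℕ, 1 ≤ i → i + 2 ≤ j → j ≤ n → σ i * σ j = σ j * σ i)
    (h_braid : ∀ i : ℕ, 1 ≤ i → i + 1 ≤ n →
      σ i * σ (i + 1) * σ i = σ (i + 1) * σ i * σ (i + 1))
    (i j : ℕ) (hj : 1 ≤ j) (hji : j < i) (hi : i ≤ n)
    (g : ℤ) (gs : ℕ → ℤ)
    (hg : g = 1 ∨ g = -1) (hgs : ∀ k, j ≤ k → k ≤ n → gs k = 1 ∨ gs k = -1)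
    (h : g = gs (i - 1) ∨ gs (i - 1) = gs i) :
    σ i ^ g * (((List.range (n + 1 - j)).map fun t => σ (j + t) ^ gs (j + t)).prod) =
      (((List.range (n + 1 - j)).map fun t =>
          σ (j + t) ^ (if j + t = i - 1 then gs i else if j + t = i then gs (i - 1)
            else gs (j + t))).prod) * σ (i - 1) ^ g := by
  obtain ⟨p, rfl⟩ : ∃ p, i = p + 1 := ⟨i - 1, by omega⟩
  obtain ⟨k, rfl⟩ : ∃ k, p = j + k := ⟨p - j, by omega⟩
  obtain ⟨q, hq⟩ : ∃ q, n = j + k + 1 + q := ⟨n - (j + k + 1), by omega⟩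
  have hp1 : 1 ≤ j + k := by omega
  have hrange : n + 1 - j = k + 1 + 1 + q := by omega
  have hsub : j + k + 1 - 1 = j + k := by omega
  rw [hrange, hsub] at *
  rw [List.range_add, List.range_add, List.range_add]
  simp only [List.map_append, List.prod_append, List.map_map, List.range_succ, List.range_zero,
    List.map_cons, List.map_nil, List.prod_cons, List.prod_nil, Function.comp]
  -- clean up the `if`s
  have hpre : ∀ l : List ℕ, (∀ t ∈ l, t < k) →
      (l.map fun t => σ (j + t) ^ (if j + t = j + k then gs (j + k + 1)
        else if j + t = j + k + 1 then gs (j + k) else gs (j + t)))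
      = l.map fun t => σ (j + t) ^ gs (j + t) := by
    intro l hl
    refine List.map_congr_left fun t ht => ?_
    have := hl t ht
    rw [if_neg (by omega), if_neg (by omega)]
  simp only [Nat.add_sub_cancel] at h
  rw [hpre _ (fun t ht => List.mem_range.mp ht)]
  have hsuf : (List.map ((fun t => σ (j + t) ^
        (if j + t = j + k then gs (j + k + 1) else if j + t = j + k + 1 then gs (j + k)
          else gs (j + t))) ∘ fun x => k + 1 + 1 + x) (List.range q))
      = List.map ((fun t => σ (j + t) ^ gs (j + t)) ∘ fun x => k + 1 + 1 + x) (List.range q) := by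
    refine List.map_congr_left fun t ht => ?_
    simp only [Function.comp]
    rw [if_neg (by omega), if_neg (by omega)]
  rw [hsuf]
  rw [if_pos (by omega), if_neg (by omega), if_pos (by omega)]
  simp only [one_mul, mul_one, Nat.add_zero]
  simp only [← add_assoc]
  set P := (List.map (fun t => σ (j + t) ^ gs (j + t)) (List.range k)).prod with hP
  set R := (List.map ((fun t => σ (j + t) ^ gs (j + t)) ∘ fun x => k + 1 + 1 + x)
      (List.range q)).prod with hR
  set x := σ (j + k) with hx
  set y := σ (j + k + 1) with hy
  have hr : x * y * x = y * x * y := h_braid (j + k) hp1 (by omega)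
  have key := braid_core x y hr g (gs (j + k)) (gs (j + k + 1)) hg
    (hgs _ (by omega) (by omega)) (hgs _ (by omega) (by omega)) h
  have cP : Commute (y ^ g) P := by
    refine Commute.list_prod_right _ _ fun z hz => ?_
    obtain ⟨t, ht, rfl⟩ := List.mem_map.mp hz
    have htk : t < k := List.mem_range.mp ht
    have : σ (j + t) * σ (j + k + 1) = σ (j + k + 1) * σ (j + t) :=
      h_comm (j + t) (j + k + 1) (by omega) (by omega) (by omega)
    exact (Commute.zpow_zpow this.symm g (gs (j + t)) : _)
  have cR : Commute (x ^ g) R := by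
    refine Commute.list_prod_right _ _ fun z hz => ?_
    obtain ⟨t, ht, rfl⟩ := List.mem_map.mp hz
    have htq : t < q := List.mem_range.mp ht
    have : σ (j + k) * σ (j + (k + 1 + 1 + t)) = σ (j + (k + 1 + 1 + t)) * σ (j + k) :=
      h_comm (j + k) (j + (k + 1 + 1 + t)) hp1 (by omega) (by omega)
    exact (Commute.zpow_zpow this g (gs (j + (k + 1 + 1 + t)))
      : Commute (x ^ g) (((fun t => σ (j + t) ^ gs (j + t)) ∘ fun x => k + 1 + 1 + x) t))
  simp only [← mul_assoc]
  rw [cP.eq]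
  calc P * y ^ g * x ^ gs (j + k) * y ^ gs (j + k + 1) * R
      = P * (y ^ g * x ^ gs (j + k) * y ^ gs (j + k + 1)) * R := by
        simp only [mul_assoc]
    _ = P * (x ^ gs (j + k + 1) * y ^ gs (j + k) * x ^ g) * R := by rw [key]
    _ = P * x ^ gs (j + k + 1) * y ^ gs (j + k) * (x ^ g * R) := by
        simp only [mul_assoc]
    _ = P * x ^ gs (j + k + 1) * y ^ gs (j + k) * (R * x ^ g) := by rw [cR.eq]
    _ = P * x ^ gs (j + k + 1) * y ^ gs (j + k) * R * x ^ g := by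
        simp only [mul_assoc]
end

section
/- In the braid group B_{a+1} with generators σ_1, …, σ_a, one has (σ_1 σ_2 ⋯ σ_{a-1})^a · σ_a · (σ_{a-1} σ_{a-2} ⋯ σ_1) = (σ_1 σ_2 ⋯ σ_a)^a. -/
namespace BraidMarkovAux

variable {G : Type*} [Group G]

/-- `up σ m k = σ m * σ (m+1) * ⋯ * σ (m+k-1)` (ascending, `k` terms). -/
def up (σ : ℕ → G) : ℕ → ℕ → G
  | _, 0 => 1
  | m, (k+1) => σ m * up σ (m+1) k

/-- `dn σ m k = σ (m+k-1) * ⋯ * σ (m+1) * σ m` (descending, `k` terms). -/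
def dn (σ : ℕ → G) : ℕ → ℕ → G
  | _, 0 => 1
  | m, (k+1) => σ (m+k) * dn σ m k

lemma up_succ_right (σ : ℕ → G) : ∀ k m, up σ m (k+1) = up σ m k * σ (m+k)
  | 0, m => by simp [up]
  | (k+1), m => by
    rw [up, up_succ_right σ k (m+1), up, ← mul_assoc,
      show m+1+k = m+(k+1) from by omega]

lemma dn_succ_left (σ : ℕ → G) : ∀ k m, dn σ m (k+1) = dn σ (m+1) k * σ m
  | 0, m => by simp [dn]
  | (k+1), m => by
    rw [dn, dn_succ_left σ k m, dn, ← mul_assoc,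
      show m+1+k = m+(k+1) from by omega]

lemma up_add (σ : ℕ → G) : ∀ p q m, up σ m (p+q) = up σ m p * up σ (m+p) q
  | 0, q, m => by simp [up]
  | (p+1), q, m => by
    have h1 : p + 1 + q = p + q + 1 := by omega
    rw [h1, up, up_add σ p q (m+1), up, mul_assoc,
      show m+1+p = m+(p+1) from by omega]

section

variable (a : ℕ) (σ : ℕ → G)
  (hc : ∀ i j : ℕ, 1 ≤ i → i + 2 ≤ j → j ≤ a → σ i * σ j = σ j * σ i)
  (hb : ∀ i : ℕ, 1 ≤ i → i + 1 ≤ a →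
      σ i * σ (i + 1) * σ i = σ (i + 1) * σ i * σ (i + 1))

include hc in
lemma comm_up : ∀ k m j, 1 ≤ j → j + 2 ≤ m → m + k ≤ a + 1 →
    σ j * up σ m k = up σ m k * σ j := by
  intro k
  induction k with
  | zero => intro m j _ _ _; simp [up]
  | succ k ih =>
    intro m j h1 h2 h3
    rw [up, ← mul_assoc, hc j m h1 h2 (by omega), mul_assoc,
      ih (m+1) j h1 (by omega) (by omega), mul_assoc]

include hc in
lemma comm_dn : ∀ k m j, 1 ≤ j → j + 2 ≤ m → m + k ≤ a + 1 →
    σ j * dn σ m k = dn σ m k * σ j := by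
  intro k
  induction k with
  | zero => intro m j _ _ _; simp [dn]
  | succ k ih =>
    intro m j h1 h2 h3
    rw [dn, ← mul_assoc, hc j (m+k) h1 (by omega) (by omega), mul_assoc,
      ih m j h1 h2 (by omega), mul_assoc]

include hc in
lemma comm_up_dn : ∀ p m k, p + 2 ≤ m → m + k ≤ a + 1 →
    dn σ m k * up σ 1 p = up σ 1 p * dn σ m k := by
  intro p
  induction p with
  | zero => intro m k _ _; simp [up]
  | succ p ih =>
    intro m k h1 h2
    rw [up_succ_right σ p 1, ← mul_assoc, ih m k (by omega) h2, mul_assoc,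
      ← comm_dn a σ hc k m (1+p) (by omega) (by omega) (by omega), ← mul_assoc]

include hc hb in
lemma swap : ∀ ℓ m, 1 ≤ m → m + ℓ ≤ a →
    dn σ (m+1) ℓ * up σ m (ℓ+1) = up σ m (ℓ+1) * dn σ m ℓ := by
  intro ℓ
  induction ℓ with
  | zero => intro m _ _; simp [dn, up]
  | succ ℓ ih =>
    intro m h1 h2
    set D := dn σ (m+1+1) ℓ with hDdef
    set U := up σ (m+1+1) ℓ with hUdef
    have hbm : σ m * σ (m+1) * σ m = σ (m+1) * σ m * σ (m+1) :=
      hb m h1 (by omega)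
    have hb' : ∀ x : G, σ (m+1) * (σ m * (σ (m+1) * x))
        = σ m * (σ (m+1) * (σ m * x)) := by
      intro x
      rw [← mul_assoc, ← mul_assoc, ← hbm, mul_assoc, mul_assoc]
    have hD : σ m * D = D * σ m :=
      comm_dn a σ hc ℓ (m+1+1) m h1 (by omega) (by omega)
    have hD' : ∀ x : G, D * (σ m * x) = σ m * (D * x) := by
      intro x; rw [← mul_assoc, ← hD, mul_assoc]
    have hU : σ m * U = U * σ m :=
      comm_up a σ hc ℓ (m+1+1) m h1 (by omega) (by omega)
    have ihm : D * (σ (m+1) * U) = (σ (m+1) * U) * dn σ (m+1) ℓ := by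
      have := ih (m+1) (by omega) (by omega)
      rwa [show up σ (m+1) (ℓ+1) = σ (m+1) * U from rfl] at this
    have ihm' : ∀ x : G, D * (σ (m+1) * (U * x))
        = σ (m+1) * (U * (dn σ (m+1) ℓ * x)) := by
      intro x
      calc D * (σ (m+1) * (U * x)) = (D * (σ (m+1) * U)) * x := by
            simp only [mul_assoc]
        _ = ((σ (m+1) * U) * dn σ (m+1) ℓ) * x := by rw [ihm]
        _ = σ (m+1) * (U * (dn σ (m+1) ℓ * x)) := by simp only [mul_assoc]
    rw [dn_succ_left σ ℓ (m+1), up, up, dn_succ_left σ ℓ m]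
    simp only [mul_assoc, ← hDdef, ← hUdef]
    rw [hb' U, hD', hU, ihm']

include hc hb in
lemma lemB : ∀ j k, j + 1 + k = a →
    dn σ (j+1+1) k * up σ 1 a = up σ 1 a * dn σ (j+1) k := by
  intro j k hjk
  have hsplit : up σ 1 a = up σ 1 j * up σ (1+j) (k+1) := by
    rw [← up_add σ j (k+1) 1, show j + (k+1) = a from by omega]
  have hcomm : dn σ (j+1+1) k * up σ 1 j = up σ 1 j * dn σ (j+1+1) k :=
    comm_up_dn a σ hc j (j+1+1) k (by omega) (by omega)
  have hswap : dn σ (j+1+1) k * up σ (j+1) (k+1)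
      = up σ (j+1) (k+1) * dn σ (j+1) k := swap a σ hc hb k (j+1) (by omega) (by omega)
  rw [hsplit, show (1+j) = j+1 from by omega, ← mul_assoc, hcomm, mul_assoc, hswap,
    ← mul_assoc]

include hc hb in
lemma key : ∀ k m, m + k = a →
    (up σ 1 a)^k = (up σ 1 (a-1))^k * dn σ (m+1) k := by
  intro k
  induction k with
  | zero => intro m _; simp [dn]
  | succ k ih =>
    intro m hm
    have hQ : up σ 1 a = up σ 1 (a-1) * σ a := by
      have h := up_succ_right σ (a-1) 1
      rw [show (a-1)+1 = a from by omega, show 1+(a-1) = a from by omega] at h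
      exact h
    calc (up σ 1 a)^(k+1) = (up σ 1 a)^k * up σ 1 a := pow_succ _ _
      _ = ((up σ 1 (a-1))^k * dn σ (m+1+1) k) * up σ 1 a := by
          rw [ih (m+1) (by omega)]
      _ = (up σ 1 (a-1))^k * (dn σ (m+1+1) k * up σ 1 a) := by rw [mul_assoc]
      _ = (up σ 1 (a-1))^k * (up σ 1 a * dn σ (m+1) k) := by
          rw [lemB a σ hc hb m k (by omega)]
      _ = (up σ 1 (a-1))^k * ((up σ 1 (a-1) * σ a) * dn σ (m+1) k) := by rw [← hQ]
      _ = (up σ 1 (a-1))^(k+1) * (σ a * dn σ (m+1) k) := by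
          rw [pow_succ]; simp only [mul_assoc]
      _ = (up σ 1 (a-1))^(k+1) * dn σ (m+1) (k+1) := by
          rw [dn, show m+1+k = a from by omega]

end

lemma list_up (σ : ℕ → G) : ∀ n, ((List.range n).map fun t => σ (t+1)).prod = up σ 1 n := by
  intro n
  induction n with
  | zero => simp [up]
  | succ n ih =>
    rw [List.range_succ, List.map_append, List.prod_append, ih,
      up_succ_right σ n 1, show 1+n = n+1 from by omega]
    simp

lemma list_dn (σ : ℕ → G) : ∀ n, ((List.range n).map fun t => σ (n - t)).prod = dn σ 1 n := by
  intro n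
  induction n with
  | zero => simp [dn]
  | succ n ih =>
    rw [List.range_succ_eq_map, List.map_cons, List.prod_cons, List.map_map]
    have hfun : ((fun t => σ (n + 1 - t)) ∘ Nat.succ) = fun t => σ (n - t) := by
      funext t
      simp [Function.comp, Nat.succ_sub_succ]
    rw [hfun, ih, Nat.sub_zero, dn, show 1+n = n+1 from by omega]

end BraidMarkovAux

/-- In the braid group `B_{a+1}` with generators `σ_1, …, σ_a`:
`(σ_1 σ_2 ⋯ σ_{a-1})^a · σ_a · (σ_{a-1} σ_{a-2} ⋯ σ_1) = (σ_1 σ_2 ⋯ σ_a)^a`. -/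
theorem braid_markov_step (a : ℕ) (ha : 2 ≤ a) {G : Type*} [Group G] (σ : ℕ → G)
    (h_comm : ∀ i j : ℕ, 1 ≤ i → i + 2 ≤ j → j ≤ a → σ i * σ j = σ j * σ i)
    (h_braid : ∀ i : ℕ, 1 ≤ i → i + 1 ≤ a →
      σ i * σ (i + 1) * σ i = σ (i + 1) * σ i * σ (i + 1)) :
    ((((List.range (a - 1)).map fun t => σ (t + 1)).prod) ^ a) * σ a *
        (((List.range (a - 1)).map fun t => σ (a - 1 - t)).prod) =
      ((((List.range a).map fun t => σ (t + 1)).prod) ^ a) := by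
  open BraidMarkovAux in
  rw [list_up σ (a-1), list_up σ a, list_dn σ (a-1),
    key a σ h_comm h_braid a 0 (by omega)]
  have hdn : dn σ (0+1) a = σ a * dn σ 1 (a-1) := by
    conv_lhs => rw [show a = (a-1)+1 from by omega]
    rw [dn, show 1+(a-1) = a from by omega]
  rw [hdn, ← mul_assoc]
end
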